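/- Let β₁, β₂ > 0 be real numbers satisfying 2β₁ − β₂ ≥ √2·π. Let p be analytic on the open unit disk 𝔻 with p(0) = 1, and suppose that for every z ∈ 𝔻 the value 1 + β₁·z·p′(z) + β₂·z²·p″(z) lies in the set {1 + log(w + (1 + w²)^{1/2}) : w ∈ 𝔻}. Then for every z ∈ 𝔻, p(z) ∈ {1 + log(w + (1 + w²)^{1/2}) : w ∈ 𝔻}, i.e. p(z) ≺ 1 + sinh⁻¹ z. -/

import Mathlib

/-!
For `v = w + √(1 + w²)` with `|w| < 1` one has `v⁻¹ = √(1 + w²) - w`, so `|log |v|| < arsinh 1`,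
and `Re v ≥ 0`; hence the petal `{arsinh w : w ∈ 𝔻}` lies in the disk of radius
`M = √(arsinh 1 ² + (π/2)²)`. Conversely it contains the disk of radius `arsinh 1`, on which
`arsinh ∘ sinh = id`.

By the Schwarz lemma `β₁ z p' + β₂ z² p'' = z h` with `|h| ≤ M`, where `h = β₁ q + β₂ z q'` for
`q = p'`. Since `(t ^ (β₁/β₂) q (t z))' = β₂⁻¹ t ^ (β₁/β₂ - 1) h (t z)`, integrating over `[0, 1]`
gives `|p'| ≤ M / β₁`, so `|p z - 1| < M / β₁ < arsinh 1` because `β₁ > √2 π / 2`.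
-/

open Metric Set
open scoped Real

theorem Real.arsinh_one : Real.arsinh 1 = Real.log (1 + √2) := by
  norm_num [Real.arsinh]

theorem Real.arsinh_one_lt_pi_div_two : Real.arsinh 1 < π / 2 := by
  have : Real.arsinh 1 < 1 := by
    conv_rhs => rw [← Real.arsinh_sinh 1]
    exact Real.arsinh_lt_arsinh.mpr (Real.self_lt_sinh_iff.mpr one_pos)
  linarith [Real.pi_gt_three]

theorem Real.four_fifths_le_arsinh_one : 4 / 5 ≤ Real.arsinh 1 := by
  rw [Real.arsinh_one, Real.le_log_iff_exp_le (by positivity)]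
  have h1 : Real.exp (1 / 10) < 10 / 9 := by
    have := Real.exp_bound_div_one_sub_of_interval' (x := 1 / 10) (by norm_num) (by norm_num)
    norm_num at this ⊢; exact this
  have h8 : Real.exp (4 / 5) = Real.exp (1 / 10) ^ 8 := by
    rw [← Real.exp_nat_mul]; norm_num
  have hsqrt : (1.4 : ℝ) ≤ √2 := Real.le_sqrt_of_sq_le (by norm_num)
  calc Real.exp (4 / 5) ≤ (10 / 9) ^ 8 := h8 ▸ pow_le_pow_left₀ (Real.exp_pos _).le h1.le 8
    _ ≤ 1 + √2 := by norm_num; linarith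

theorem Real.sqrt_arsinh_one_sq_add_div_lt {β : ℝ} (hβ : √2 * π / 2 < β) :
    √(Real.arsinh 1 ^ 2 + (π / 2) ^ 2) / β < Real.arsinh 1 := by
  have hΛ := Real.four_fifths_le_arsinh_one
  have hπ := Real.pi_gt_d2
  have hβ0 : 0 < √2 * π / 2 := by positivity
  rw [div_lt_iff₀ (hβ0.trans hβ)]
  refine lt_of_le_of_lt (Real.sqrt_le_left (by positivity) |>.mpr ?_)
    (mul_lt_mul_of_pos_left hβ (by linarith))
  rw [mul_pow, show (√2 * π / 2) ^ 2 = π ^ 2 / 2 by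
    rw [div_pow, mul_pow, Real.sq_sqrt zero_le_two]; ring]
  have hΛ2 : 16 / 25 ≤ Real.arsinh 1 ^ 2 := by nlinarith
  have hπ2 : 9 ≤ π ^ 2 := by nlinarith
  nlinarith [mul_le_mul_of_nonneg_right hΛ2 (by linarith : (0 : ℝ) ≤ π ^ 2 / 2 - 1)]

namespace Complex

noncomputable def arsinh (w : ℂ) : ℂ := log (w + (1 + w ^ 2) ^ ((1 : ℂ) / 2))

theorem cpow_one_div_two_sq (ζ : ℂ) : (ζ ^ ((1 : ℂ) / 2)) ^ 2 = ζ := by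
  rw [one_div]; exact cpow_ofNat_inv_pow ζ 2

theorem re_cpow_one_div_two_nonneg (ζ : ℂ) : 0 ≤ (ζ ^ ((1 : ℂ) / 2)).re := by
  rw [one_div, cpow_inv_two_re]; exact Real.sqrt_nonneg _

theorem add_cpow_one_div_two_mul_sub (w : ℂ) :
    (w + (1 + w ^ 2) ^ ((1 : ℂ) / 2)) * ((1 + w ^ 2) ^ ((1 : ℂ) / 2) - w) = 1 := by
  linear_combination cpow_one_div_two_sq (1 + w ^ 2)

theorem inv_add_cpow_one_div_two (w : ℂ) :
    (w + (1 + w ^ 2) ^ ((1 : ℂ) / 2))⁻¹ = (1 + w ^ 2) ^ ((1 : ℂ) / 2) - w :=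
  inv_eq_of_mul_eq_one_right (add_cpow_one_div_two_mul_sub w)

theorem re_add_cpow_nonneg (w : ℂ) : 0 ≤ (w + (1 + w ^ 2) ^ ((1 : ℂ) / 2)).re := by
  set v := w + (1 + w ^ 2) ^ ((1 : ℂ) / 2)
  -- `v` and `v⁻¹` have real parts of the same sign, and their sum is twice the real part of a
  -- principal square root
  have hsum : v.re + v⁻¹.re = 2 * ((1 + w ^ 2) ^ ((1 : ℂ) / 2)).re := by
    rw [inv_add_cpow_one_div_two]; simp [v]; ring
  by_contra! hneg
  have : v⁻¹.re ≤ 0 := by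
    rw [inv_re]; exact div_nonpos_of_nonpos_of_nonneg hneg.le (normSq_nonneg _)
  linarith [re_cpow_one_div_two_nonneg (1 + w ^ 2)]

theorem norm_add_cpow_lt {w : ℂ} (hw : ‖w‖ < 1) :
    ‖w + (1 + w ^ 2) ^ ((1 : ℂ) / 2)‖ < 1 + √2 ∧
      ‖(w + (1 + w ^ 2) ^ ((1 : ℂ) / 2))⁻¹‖ < 1 + √2 := by
  set s := (1 + w ^ 2) ^ ((1 : ℂ) / 2)
  have hs : ‖s‖ < √2 := by
    refine Real.lt_sqrt (norm_nonneg _) |>.mpr ?_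
    rw [← norm_pow, cpow_one_div_two_sq]
    calc ‖1 + w ^ 2‖ ≤ 1 + ‖w‖ ^ 2 := (norm_add_le _ _).trans_eq (by rw [norm_one, norm_pow])
      _ < 2 := by nlinarith [norm_nonneg w]
  refine ⟨(norm_add_le w s).trans_lt (by linarith), ?_⟩
  rw [inv_add_cpow_one_div_two]
  exact (norm_sub_le s w).trans_lt (by linarith)

theorem norm_arsinh_lt {w : ℂ} (hw : ‖w‖ < 1) :
    ‖arsinh w‖ < √(Real.arsinh 1 ^ 2 + (π / 2) ^ 2) := by
  set v := w + (1 + w ^ 2) ^ ((1 : ℂ) / 2)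
  obtain ⟨hv, hv'⟩ := norm_add_cpow_lt hw
  have hv0 : 0 < ‖v‖ :=
    norm_pos_iff.mpr (left_ne_zero_of_mul_eq_one (add_cpow_one_div_two_mul_sub w))
  have hre : |(log v).re| < Real.arsinh 1 := by
    rw [log_re, Real.arsinh_one, abs_lt]
    constructor
    · rw [neg_lt, ← Real.log_inv, ← norm_inv]
      exact Real.log_lt_log (by rwa [norm_inv, inv_pos]) hv'
    · exact Real.log_lt_log hv0 hv
  have him : |(log v).im| ≤ π / 2 := by
    rw [log_im, abs_arg_le_pi_div_two_iff]; exact re_add_cpow_nonneg w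
  refine Real.lt_sqrt (norm_nonneg _) |>.mpr ?_
  rw [arsinh, Complex.sq_norm, normSq_apply, ← sq, ← sq]
  have h1 := sq_lt_sq' (abs_lt.mp hre).1 (abs_lt.mp hre).2
  have h2 := sq_le_sq' (abs_le.mp him).1 (abs_le.mp him).2
  exact add_lt_add_of_lt_of_le h1 h2

theorem norm_sinh_le (u : ℂ) : ‖sinh u‖ ≤ Real.sinh ‖u‖ :=
  (hasSum_sinh u).norm_le_of_bounded (Real.hasSum_sinh ‖u‖) fun n => by
    rw [norm_div, norm_pow, norm_natCast]

theorem norm_sinh_lt_one {u : ℂ} (hu : ‖u‖ < Real.arsinh 1) : ‖sinh u‖ < 1 :=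
  (norm_sinh_le u).trans_lt <| Real.sinh_arsinh 1 ▸ Real.sinh_lt_sinh.mpr hu

theorem re_cosh_pos {u : ℂ} (hu : |u.im| < π / 2) : 0 < (cosh u).re := by
  have hcos : 0 < Real.cos u.im := Real.cos_pos_of_mem_Ioo (abs_lt.mp hu)
  have h2 :
      2 * (cosh u).re = Real.exp u.re * Real.cos u.im + Real.exp (-u.re) * Real.cos u.im :=
    calc 2 * (cosh u).re = (2 * cosh u).re := by simp
      _ = _ := by rw [two_cosh, add_re, exp_re, exp_re, neg_re, neg_im, Real.cos_neg]
  nlinarith [Real.exp_pos u.re, Real.exp_pos (-u.re)]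

theorem arsinh_sinh {u : ℂ} (hu : |u.im| < π / 2) : arsinh (sinh u) = u := by
  have hu' := abs_lt.mp hu
  rw [arsinh, show 1 + sinh u ^ 2 = cosh u ^ 2 by linear_combination -cosh_sq_sub_sinh_sq u,
    one_div, sq_cpow_two_inv (re_cosh_pos hu), sinh_add_cosh, log_exp] <;>
    linarith [Real.pi_pos]

theorem exists_eq_arsinh_of_norm_lt {u : ℂ} (hu : ‖u‖ < Real.arsinh 1) :
    ∃ w ∈ ball (0 : ℂ) 1, u = arsinh w :=
  ⟨sinh u, mem_ball_zero_iff.mpr (norm_sinh_lt_one hu), (arsinh_sinh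
    ((abs_im_le_norm u).trans_lt (hu.trans Real.arsinh_one_lt_pi_div_two))).symm⟩

end Complex

theorem norm_le_of_forall_norm_mul_le {h : ℂ → ℂ} (hh : DifferentiableOn ℂ h (ball 0 1)) {M : ℝ}
    (hM : ∀ ζ ∈ ball (0 : ℂ) 1, ‖ζ * h ζ‖ ≤ M) {z : ℂ} (hz : z ∈ ball (0 : ℂ) 1) :
    ‖h z‖ ≤ M := by
  set g : ℂ → ℂ := fun ζ => ζ * h ζ
  have hdslope : dslope g 0 z = h z := by
    rcases eq_or_ne z 0 with rfl | hz0
    · have hg : HasDerivAt g (1 * h 0 + 0 * deriv h 0) 0 :=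
        (hasDerivAt_id' 0).mul ((hh 0 hz).differentiableAt (isOpen_ball.mem_nhds hz)).hasDerivAt
      rw [dslope_same, hg.deriv, one_mul, zero_mul, add_zero]
    · simpa using dslope_sub_smul_of_ne h hz0
  have hmaps : MapsTo g (ball 0 1) (closedBall (g 0) M) := fun ζ hζ => by
    simpa [g] using hM ζ hζ
  have hgd : DifferentiableOn ℂ g (ball 0 1) := differentiableOn_id.mul hh
  simpa [hdslope] using Complex.norm_dslope_le_div_of_mapsTo_ball hgd hmaps hz

theorem DifferentiableOn.add_mul_deriv {q : ℂ → ℂ} (hq : DifferentiableOn ℂ q (ball 0 1))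
    (a b : ℂ) : DifferentiableOn ℂ (fun ζ => a * q ζ + b * ζ * _root_.deriv q ζ) (ball 0 1) :=
  fun ζ hζ => ((hq ζ hζ).const_mul a).add
    ((differentiableWithinAt_id.const_mul b).mul (hq.deriv isOpen_ball ζ hζ))

theorem ofReal_mul_mem_ball_of_mem_Icc {z : ℂ} (hz : z ∈ ball (0 : ℂ) 1) {t : ℝ}
    (ht : t ∈ Icc (0 : ℝ) 1) : (t : ℂ) * z ∈ ball (0 : ℂ) 1 := by
  rw [mem_ball_zero_iff] at hz ⊢
  rw [norm_mul, Complex.norm_real, Real.norm_of_nonneg ht.1]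
  nlinarith [ht.2, norm_nonneg z]

theorem hasDerivAt_comp_ofReal_mul {f : ℂ → ℂ} {z : ℂ} {t : ℝ}
    (hf : DifferentiableAt ℂ f (t * z)) :
    HasDerivAt (fun s : ℝ => f (s * z)) (deriv f (t * z) * z) t := by
  simpa using (hf.hasDerivAt.comp (t : ℂ) (hasDerivAt_mul_const z)).comp_ofReal

theorem hasDerivAt_rpow_div_smul_comp_ofReal_mul {q : ℂ → ℂ} {z : ℂ} {t β₁ β₂ : ℝ}
    (ht : 0 < t) (hβ₂ : β₂ ≠ 0) (hq : DifferentiableAt ℂ q (t * z)) :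
    HasDerivAt (fun s : ℝ => s ^ (β₁ / β₂) • q (s * z))
      ((t ^ (β₁ / β₂ - 1) / β₂) • (β₁ * q (t * z) + β₂ * (t * z) * deriv q (t * z))) t := by
  refine ((Real.hasDerivAt_rpow_const (Or.inl ht.ne')).smul
    (hasDerivAt_comp_ofReal_mul hq)).congr_deriv ?_
  rw [show t ^ (β₁ / β₂) = t ^ (β₁ / β₂ - 1) * t by rw [← Real.rpow_add_one ht.ne']; ring_nf]
  have hβ₂' : (β₂ : ℂ) ≠ 0 := by exact_mod_cast hβ₂
  simp only [Complex.real_smul]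
  push_cast
  field_simp
  ring

theorem continuousOn_comp_ofReal_mul {f : ℂ → ℂ} (hf : DifferentiableOn ℂ f (ball 0 1)) {z : ℂ}
    (hz : z ∈ ball (0 : ℂ) 1) : ContinuousOn (fun s : ℝ => f (s * z)) (Icc 0 1) :=
  fun t ht => (ContinuousAt.comp (f := fun s : ℝ => (s : ℂ) * z)
    (hf.continuousOn.continuousAt (isOpen_ball.mem_nhds (ofReal_mul_mem_ball_of_mem_Icc hz ht)))
    (by fun_prop)).continuousWithinAt

theorem norm_le_div_of_forall_norm_add_mul_deriv_le {q : ℂ → ℂ}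
    (hq : DifferentiableOn ℂ q (ball 0 1)) {β₁ β₂ M : ℝ} (hβ₁ : 0 < β₁) (hβ₂ : 0 < β₂)
    (hM : ∀ ζ ∈ ball (0 : ℂ) 1, ‖β₁ * q ζ + β₂ * ζ * deriv q ζ‖ ≤ M)
    {z : ℂ} (hz : z ∈ ball (0 : ℂ) 1) :
    ‖q z‖ ≤ M / β₁ := by
  set b := β₁ / β₂
  have hb : 0 < b := div_pos hβ₁ hβ₂
  set h : ℂ → ℂ := fun ζ => β₁ * q ζ + β₂ * ζ * deriv q ζ
  have hseg := fun t (ht : t ∈ Icc (0 : ℝ) 1) => ofReal_mul_mem_ball_of_mem_Icc hz ht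
  have hderiv : ∀ t ∈ Ioo (0 : ℝ) 1, HasDerivAt (fun s : ℝ => s ^ b • q (s * z))
      ((t ^ (b - 1) / β₂) • h (t * z)) t := fun t ht =>
    hasDerivAt_rpow_div_smul_comp_ofReal_mul ht.1 hβ₂.ne'
      (hq.differentiableAt (isOpen_ball.mem_nhds (hseg t (Ioo_subset_Icc_self ht))))
  have hcont : ContinuousOn (fun s : ℝ => s ^ b • q (s * z)) (Icc 0 1) :=
    (Real.continuous_rpow_const hb.le).continuousOn.smul (continuousOn_comp_ofReal_mul hq hz)
  have hpow : IntervalIntegrable (fun s : ℝ => s ^ (b - 1) / β₂) MeasureTheory.volume 0 1 :=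
    (intervalIntegral.intervalIntegrable_rpow' (by linarith)).div_const _
  have hhc : ContinuousOn (fun s : ℝ => h (s * z)) (uIcc 0 1) := by
    rw [uIcc_of_le zero_le_one]
    exact continuousOn_comp_ofReal_mul (hq.add_mul_deriv _ _) hz
  have hftc := intervalIntegral.integral_eq_sub_of_hasDerivAt_of_le zero_le_one hcont hderiv
    (hpow.smul_continuousOn hhc)
  simp only [Real.one_rpow, Real.zero_rpow hb.ne', one_smul, zero_smul, sub_zero,
    Complex.ofReal_one, one_mul] at hftc
  calc ‖q z‖ = ‖∫ t in (0 : ℝ)..1, (t ^ (b - 1) / β₂) • h (t * z)‖ := by rw [hftc]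
    _ ≤ ∫ t in (0 : ℝ)..1, t ^ (b - 1) / β₂ * M := by
      refine intervalIntegral.norm_integral_le_of_norm_le zero_le_one
        (Filter.Eventually.of_forall fun t ht => ?_) (hpow.mul_const M)
      have ht0 : 0 ≤ t ^ (b - 1) / β₂ := div_nonneg (Real.rpow_nonneg ht.1.le _) hβ₂.le
      rw [norm_smul, Real.norm_of_nonneg ht0]
      exact mul_le_mul_of_nonneg_left (hM _ (hseg t (Ioc_subset_Icc_self ht))) ht0
    _ = M / β₁ := by
      rw [intervalIntegral.integral_mul_const, intervalIntegral.integral_div,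
        integral_rpow (Or.inl (by linarith))]
      simp only [sub_add_cancel, Real.one_rpow, Real.zero_rpow hb.ne', b, sub_zero]
      field_simp

theorem stmt15 (β₁ β₂ : ℝ) (hβ₁ : 0 < β₁) (hβ₂ : 0 < β₂)
    (hcond : (2 * β₁ - β₂) ≥ Real.sqrt 2 * Real.pi)
    (p : ℂ → ℂ) (hp : AnalyticOnNhd ℂ p (ball 0 1)) (hp0 : p 0 = 1)
    (hsub : ∀ z ∈ ball (0 : ℂ) 1,
      ∃ w ∈ ball (0 : ℂ) 1, (1 + (β₁ : ℂ) * z * deriv p z + (β₂ : ℂ) * z ^ 2 * deriv (deriv p) z) = 1 + Complex.log (w + (1 + w ^ 2) ^ ((1 : ℂ) / 2))) :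
    ∀ z ∈ ball (0 : ℂ) 1, ∃ w ∈ ball (0 : ℂ) 1, p z = 1 + Complex.log (w + (1 + w ^ 2) ^ ((1 : ℂ) / 2)) := by
  intro z hz
  set M := √(Real.arsinh 1 ^ 2 + (π / 2) ^ 2)
  have hq : DifferentiableOn ℂ (deriv p) (ball 0 1) := hp.deriv.differentiableOn
  have hg : ∀ ζ ∈ ball (0 : ℂ) 1,
      ‖ζ * (β₁ * deriv p ζ + β₂ * ζ * deriv (deriv p) ζ)‖ ≤ M := fun ζ hζ => by
    obtain ⟨w, hw, hζw⟩ := hsub ζ hζ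
    rw [show ζ * (β₁ * deriv p ζ + β₂ * ζ * deriv (deriv p) ζ) = Complex.arsinh w by
      rw [Complex.arsinh]; linear_combination hζw]
    exact (Complex.norm_arsinh_lt (mem_ball_zero_iff.mp hw)).le
  have hp' : ∀ ζ ∈ ball (0 : ℂ) 1, ‖deriv p ζ‖ ≤ M / β₁ := fun ζ =>
    norm_le_div_of_forall_norm_add_mul_deriv_le hq hβ₁ hβ₂ fun ξ =>
      norm_le_of_forall_norm_mul_le (hq.add_mul_deriv _ _) hg
  have hpz : ‖p z - 1‖ ≤ M / β₁ * ‖z‖ := by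
    simpa [hp0] using (convex_ball (0 : ℂ) 1).norm_image_sub_le_of_norm_deriv_le
      (fun ζ hζ => hp.differentiableOn.differentiableAt (isOpen_ball.mem_nhds hζ)) hp'
      (mem_ball_self one_pos) hz
  have hMβ : M / β₁ < Real.arsinh 1 := Real.sqrt_arsinh_one_sq_add_div_lt (by linarith)
  have hlt : ‖p z - 1‖ < Real.arsinh 1 :=
    calc ‖p z - 1‖ ≤ M / β₁ * ‖z‖ := hpz
      _ ≤ M / β₁ := mul_le_of_le_one_right (by positivity) (mem_ball_zero_iff.mp hz).le
      _ < Real.arsinh 1 := hMβ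
  obtain ⟨w, hw, hpw⟩ := Complex.exists_eq_arsinh_of_norm_lt hlt
  exact ⟨w, hw, eq_add_of_sub_eq' hpw⟩
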